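/- Let nmExt : ({0,1}^n)^s → {0,1}^m be an s-source non-malleable extractor with error ε for min-entropy k. Let k' ≥ k, let X_1,…,X_s be independent (n,k')-sources, let f_1,…,f_s : {0,1}^n → {0,1}^n be tampering functions such that some f_j has no fixed points, and fix an index i ∈ [s]. Then for every pair (z, z') ∈ {0,1}^m × {0,1}^m, the set B_{z,z'} of all y ∈ {0,1}^n such that |Pr[nmExt(X_1,…,X_{i−1}, y, X_{i+1},…,X_s) = z ∧ nmExt(f_1(X_1),…,f_{i−1}(X_{i−1}), f_i(y), f_{i+1}(X_{i+1}),…,f_s(X_s)) = z'] − 2^{−m}·Pr[nmExt(f_1(X_1),…,f_{i−1}(X_{i−1}), f_i(y), f_{i+1}(X_{i+1}),…,f_s(X_s)) = z']| > ε has size |B_{z,z'}| < 2^{k+1}. -/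

import Mathlib

open Finset Real

/-- Bit strings of length `n`. -/
abbrev BS (n : ℕ) := Fin n → Bool

noncomputable section

/-- `p` is a probability distribution on the finite type `α`. -/
def IsDist {α : Type*} [Fintype α] (p : α → ℝ) : Prop :=
  (∀ x, 0 ≤ p x) ∧ ∑ x, p x = 1

/-- Statistical distance between two distributions on a finite type. -/
def statDist {α : Type*} [Fintype α] (p q : α → ℝ) : ℝ :=
  (∑ x, |p x - q x|) / 2

/-- Pushforward of a distribution along a function. -/
def distMap {α β : Type*} [Fintype α] [DecidableEq β] (f : α → β) (p : α → ℝ) : β → ℝ :=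
  fun y => ∑ x ∈ Finset.univ.filter (fun x => f x = y), p x

/-- Product (independent joint) distribution. -/
def distProd {α β : Type*} (p : α → ℝ) (q : β → ℝ) : α × β → ℝ :=
  fun z => p z.1 * q z.2

/-- Product of finitely many distributions (mutually independent joint distribution). -/
def distPi {ι : Type*} {α : ι → Type*} [Fintype ι] (p : ∀ i, α i → ℝ) : (∀ i, α i) → ℝ :=
  fun x => ∏ i, p i (x i)

/-- The uniform distribution on a finite type. -/
def unifDist (α : Type*) [Fintype α] : α → ℝ :=
  fun _ => (Fintype.card α : ℝ)⁻¹

/-- `p` has min-entropy at least `k`, i.e. every point has probability at most `2 ^ (-k)`. -/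
def MinEntropyGE {α : Type*} (p : α → ℝ) (k : ℝ) : Prop :=
  ∀ x, p x ≤ (2:ℝ) ^ (-k)

/-- `nmExt` is an `s`-source non-malleable extractor with error `ε` for min-entropy `k`. -/
def IsNMsExt {n m : ℕ} (s : ℕ) (nmExt : (Fin s → BS n) → BS m) (k ε : ℝ) : Prop :=
  ∀ p : Fin s → (BS n → ℝ), (∀ i, IsDist (p i)) → (∀ i, MinEntropyGE (p i) k) →
    ∀ f : Fin s → (BS n → BS n), (∃ i, ∀ x, f i x ≠ x) →
      statDist
        (distMap (fun x : Fin s → BS n => (nmExt x, nmExt (fun i => f i (x i))))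
          (distPi p))
        (distProd (unifDist (BS m))
          (distMap (fun x : Fin s → BS n => nmExt (fun i => f i (x i))) (distPi p)))
      ≤ ε

/-- `nmExt` is a strong `s`-source non-malleable extractor with error `ε` for
min-entropy `k`: in addition to being non-malleable, for every index `i₀` the output is
close to uniform even given the tampered output and the `i₀`-th source. -/
def IsStrongNMsExt {n m : ℕ} (s : ℕ) (nmExt : (Fin s → BS n) → BS m) (k ε : ℝ) : Prop :=
  IsNMsExt s nmExt k ε ∧
  ∀ p : Fin s → (BS n → ℝ), (∀ i, IsDist (p i)) → (∀ i, MinEntropyGE (p i) k) →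
    ∀ f : Fin s → (BS n → BS n), (∃ i, ∀ x, f i x ≠ x) →
      ∀ i₀ : Fin s,
        statDist
          (distMap (fun x : Fin s → BS n => (nmExt x, nmExt (fun i => f i (x i)), x i₀))
            (distPi p))
          (distProd (unifDist (BS m))
            (distMap (fun x : Fin s → BS n => (nmExt (fun i => f i (x i)), x i₀))
              (distPi p)))
        ≤ ε

/-!
If at least `2^(k+1)` seeds `y` had deviation beyond `ε`, at least `2^k` of them would deviate
in the same direction. The flat distribution on those seeds is a `k`-source, so the extractor
property applies with it in place of the `i`-th source (the other sources have min-entropy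
`k' ≥ k`). At the point `(z, z')` the gap between the joint law of the two outputs and
`U_m × (tampered output)` is the average of the deviations over that flat source, hence exceeds
`ε`, whereas a pointwise gap never exceeds the statistical distance.
-/

theorem MinEntropyGE.mono {α : Type*} {p : α → ℝ} {k k' : ℝ} (hp : MinEntropyGE p k')
    (hk : k ≤ k') : MinEntropyGE p k :=
  fun x => (hp x).trans (rpow_le_rpow_of_exponent_le one_le_two (neg_le_neg hk))

section Distributions

variable {α : Type*} [Fintype α]

theorem abs_sub_le_statDist {P Q : α → ℝ} (hPQ : ∑ x, P x = ∑ x, Q x) (t : α) :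
    |P t - Q t| ≤ statDist P Q := by
  classical
  have hrest : P t - Q t = -∑ x ∈ univ.erase t, (P x - Q x) := by
    have hzero : ∑ x, (P x - Q x) = 0 := by rw [sum_sub_distrib, hPQ, sub_self]
    have h := Finset.add_sum_erase univ (fun x => P x - Q x) (mem_univ t)
    linarith
  have hle : |P t - Q t| ≤ ∑ x ∈ univ.erase t, |P x - Q x| := by
    rw [hrest, abs_neg]
    exact abs_sum_le_sum_abs _ _
  have htotal := Finset.add_sum_erase univ (fun x => |P x - Q x|) (mem_univ t)
  rw [statDist]
  linarith

theorem distMap_apply_eq_sum {β : Type*} [DecidableEq β] (g : α → β) (p : α → ℝ) (b : β) :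
    distMap g p b = ∑ x, p x * if g x = b then 1 else 0 := by
  simp only [distMap, sum_filter, mul_ite, mul_one, mul_zero]

theorem sum_distMap {β : Type*} [Fintype β] [DecidableEq β] (g : α → β) (p : α → ℝ) :
    ∑ b, distMap g p b = ∑ x, p x := by
  rw [Fintype.sum_congr _ _ (distMap_apply_eq_sum g p), sum_comm]
  simp

theorem sum_distPi {ι : Type*} [Fintype ι] [DecidableEq ι] {κ : ι → Type*}
    [∀ i, Fintype (κ i)] {p : ∀ i, κ i → ℝ} (hp : ∀ i, ∑ v, p i v = 1) :
    ∑ x, distPi p x = 1 := by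
  unfold distPi
  rw [← Fintype.prod_sum, prod_eq_one fun i _ => hp i]

theorem sum_distProd {β : Type*} [Fintype β] (p : α → ℝ) (q : β → ℝ) :
    ∑ z, distProd p q z = (∑ x, p x) * ∑ y, q y := by
  rw [Fintype.sum_mul_sum, ← Fintype.sum_prod_type']
  rfl

theorem sum_unifDist [Nonempty α] : ∑ x, unifDist α x = 1 := by
  simp [unifDist]

theorem unifDist_bitString {m : ℕ} (z : BS m) : unifDist (BS m) z = (2 : ℝ) ^ (-(m : ℝ)) := by
  simp [unifDist, BS, rpow_neg, rpow_natCast]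

end Distributions

section ResampleCoordinate

variable {ι : Type*} [Fintype ι] [DecidableEq ι] {κ : ι → Type*} [∀ i, Fintype (κ i)]

omit [∀ i, Fintype (κ i)] in
theorem distPi_mul_eq_mul_distPi_update (p : ∀ i, κ i → ℝ) (i : ι) (q : κ i → ℝ)
    (x : ∀ i, κ i) (y : κ i) :
    distPi p x * q y = p i (x i) * distPi (Function.update p i q) (Function.update x i y) := by
  have hrest : ∏ j ∈ univ.erase i, Function.update p i q j (Function.update x i y j)
      = ∏ j ∈ univ.erase i, p j (x j) :=
    prod_congr rfl fun j hj => by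
      rw [Function.update_of_ne (ne_of_mem_erase hj), Function.update_of_ne (ne_of_mem_erase hj)]
  unfold distPi
  rw [← mul_prod_erase univ _ (mem_univ i),
    ← mul_prod_erase univ (fun j => Function.update p i q j (Function.update x i y j)) (mem_univ i),
    hrest, Function.update_self, Function.update_self]
  ring

theorem sum_distPi_update_mul {p : ∀ i, κ i → ℝ} {i : ι} (hpi : ∑ v, p i v = 1)
    (q : κ i → ℝ) (F : (∀ i, κ i) → ℝ) :
    ∑ x, distPi (Function.update p i q) x * F x
      = ∑ y, q y * ∑ x, distPi p x * F (Function.update x i y) := by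
  -- `(x, y) ↦ (update x i y, x i)` swaps the value put in at coordinate `i` with the one discarded.
  let swap : Equiv.Perm ((∀ i, κ i) × κ i) :=
    Function.Involutive.toPerm (fun xy => (Function.update xy.1 i xy.2, xy.1 i))
      fun xy => by simp
  calc ∑ x, distPi (Function.update p i q) x * F x
      = ∑ xy : (∀ i, κ i) × κ i, p i xy.2 * (distPi (Function.update p i q) xy.1 * F xy.1) := by
        simp only [Fintype.sum_prod_type]
        rw [sum_comm, ← Fintype.sum_mul_sum, hpi, one_mul]
    _ = ∑ xy : (∀ i, κ i) × κ i, distPi p xy.1 * q xy.2 * F (Function.update xy.1 i xy.2) :=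
        (Fintype.sum_equiv swap _ _ fun xy => by
          rw [distPi_mul_eq_mul_distPi_update, mul_assoc]
          rfl).symm
    _ = ∑ y, q y * ∑ x, distPi p x * F (Function.update x i y) := by
        simp only [Fintype.sum_prod_type, mul_sum]
        rw [sum_comm]
        exact sum_congr rfl fun y _ => sum_congr rfl fun x _ => by ring

theorem distMap_distPi_update {β : Type*} [DecidableEq β] (g : (∀ i, κ i) → β)
    {p : ∀ i, κ i → ℝ} {i : ι} (hpi : ∑ v, p i v = 1) (q : κ i → ℝ) (b : β) :
    distMap g (distPi (Function.update p i q)) b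
      = ∑ y, q y * distMap (fun x => g (Function.update x i y)) (distPi p) b := by
  simp only [distMap_apply_eq_sum]
  exact sum_distPi_update_mul hpi q _

end ResampleCoordinate

section UniformOnFinset

variable {α : Type*} [DecidableEq α]

def unifOn (S : Finset α) : α → ℝ :=
  fun y => if y ∈ S then (#S : ℝ)⁻¹ else 0

theorem isDist_unifOn [Fintype α] {S : Finset α} (hS : S.Nonempty) : IsDist (unifOn S) := by
  refine ⟨fun y => ?_, ?_⟩
  · unfold unifOn
    split_ifs <;> positivity
  · simp only [unifOn, sum_ite_mem, univ_inter, sum_const, nsmul_eq_mul]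
    exact mul_inv_cancel₀ (Nat.cast_ne_zero.mpr hS.card_pos.ne')

theorem minEntropyGE_unifOn {S : Finset α} {k : ℝ} (hS : (2 : ℝ) ^ k ≤ #S) :
    MinEntropyGE (unifOn S) k := by
  intro y
  rw [rpow_neg zero_le_two]
  unfold unifOn
  split_ifs
  · exact inv_anti₀ (rpow_pos_of_pos two_pos k) hS
  · positivity

theorem sum_unifOn_mul [Fintype α] (S : Finset α) (D : α → ℝ) :
    ∑ y, unifOn S y * D y = (#S : ℝ)⁻¹ * ∑ y ∈ S, D y := by
  simp only [unifOn, ite_mul, zero_mul, sum_ite_mem, univ_inter, mul_sum]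

end UniformOnFinset

theorem card_filter_lt_lt_of_sum_le {β : Type*} [Fintype β] (D : β → ℝ) {ε c : ℝ} (hc : 0 < c)
    (hsum : ∀ S : Finset β, c ≤ #S → ∑ y ∈ S, D y ≤ ε * #S) :
    (#{y | ε < D y} : ℝ) < c := by
  by_contra! hcard
  have hne : ({y | ε < D y} : Finset β).Nonempty := card_pos.mp (by exact_mod_cast hc.trans_le hcard)
  have hlt : ∑ _y ∈ ({y | ε < D y} : Finset β), ε < ∑ y ∈ {y | ε < D y}, D y :=
    sum_lt_sum_of_nonempty hne fun y hy => (mem_filter.mp hy).2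
  rw [sum_const, nsmul_eq_mul, mul_comm] at hlt
  linarith [hsum _ hcard]

theorem card_filter_lt_abs_lt_of_abs_sum_le {β : Type*} [Fintype β] (D : β → ℝ) {ε c : ℝ}
    (hc : 0 < c) (hsum : ∀ S : Finset β, c ≤ #S → |∑ y ∈ S, D y| ≤ ε * #S) :
    (#{y | ε < |D y|} : ℝ) < 2 * c := by
  classical
  have hpos := card_filter_lt_lt_of_sum_le D hc fun S hS => (le_abs_self _).trans (hsum S hS)
  have hneg := card_filter_lt_lt_of_sum_le (fun y => -D y) hc fun S hS => by
    rw [sum_neg_distrib]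
    exact (neg_le_abs _).trans (hsum S hS)
  have hsplit : #{y | ε < |D y|} ≤ #{y | ε < D y} + #{y | ε < -D y} := by
    simp only [lt_abs]
    rw [filter_or]
    exact card_union_le _ _
  have hsplit_real : (#{y | ε < |D y|} : ℝ) ≤ #{y | ε < D y} + #{y | ε < -D y} := by
    exact_mod_cast hsplit
  linarith

theorem IsNMsExt.abs_sum_mul_deviation_le {n m s : ℕ} {nmExt : (Fin s → BS n) → BS m} {k ε : ℝ}
    (h : IsNMsExt s nmExt k ε) {k' : ℝ} (hk : k ≤ k') {p : Fin s → (BS n → ℝ)}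
    (hp : ∀ i, IsDist (p i)) (hpk : ∀ i, MinEntropyGE (p i) k') {f : Fin s → (BS n → BS n)}
    (hf : ∃ j, ∀ x, f j x ≠ x) (i : Fin s) (z z' : BS m) {q : BS n → ℝ} (hq : IsDist q)
    (hqk : MinEntropyGE q k) :
    |∑ y, q y * (distMap (fun x : Fin s → BS n =>
                (nmExt (Function.update x i y),
                 nmExt (fun j => f j (Function.update x i y j))))
              (distPi p) (z, z')
            - (2:ℝ) ^ (-(m : ℝ)) *
              distMap (fun x : Fin s → BS n =>
                nmExt (fun j => f j (Function.update x i y j))) (distPi p) z')| ≤ ε := by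
  set p' := Function.update p i q
  have hp' : ∀ j, IsDist (p' j) := fun j => by
    rcases eq_or_ne j i with rfl | hj
    · simpa [p'] using hq
    · simpa [p', Function.update_of_ne hj] using hp j
  have hp'k : ∀ j, MinEntropyGE (p' j) k := fun j => by
    rcases eq_or_ne j i with rfl | hj
    · simpa [p'] using hqk
    · simpa [p', Function.update_of_ne hj] using (hpk j).mono hk
  have htotal : ∑ x, distPi p' x = 1 := sum_distPi fun j => (hp' j).2
  have hclose := (abs_sub_le_statDist (by
      rw [sum_distMap, sum_distProd, sum_unifDist, sum_distMap, htotal, one_mul]) (z, z')).trans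
    (h p' hp' hp'k f hf)
  rw [distProd, unifDist_bitString, distMap_distPi_update _ (hp i).2,
    distMap_distPi_update _ (hp i).2, mul_sum, ← sum_sub_distrib] at hclose
  refine le_of_eq_of_le (congrArg abs (sum_congr rfl fun y _ => ?_)) hclose
  dsimp only
  ring

/-- the set of bad seeds `y` for a fixed output pair `(z,z')` has size
less than `2^(k+1)`.  The probabilities are taken over the independent sources
`X_1,…,X_s`, with the `i`-th coordinate replaced by the fixed value `y`
(via `Function.update`). -/
theorem stmt10 {n m s : ℕ} (nmExt : (Fin s → BS n) → BS m) (k ε : ℝ)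
    (h : IsNMsExt s nmExt k ε) (k' : ℝ) (hk : k' ≥ k)
    (p : Fin s → (BS n → ℝ)) (hp : ∀ i, IsDist (p i)) (hpk : ∀ i, MinEntropyGE (p i) k')
    (f : Fin s → (BS n → BS n)) (hf : ∃ j, ∀ x, f j x ≠ x) (i : Fin s)
    (z z' : BS m) :
    (Set.ncard {y : BS n |
        ε < |distMap (fun x : Fin s → BS n =>
                (nmExt (Function.update x i y),
                 nmExt (fun j => f j (Function.update x i y j))))
              (distPi p) (z, z')
            - (2:ℝ) ^ (-(m : ℝ)) *
              distMap (fun x : Fin s → BS n =>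
                nmExt (fun j => f j (Function.update x i y j))) (distPi p) z'|} : ℝ)
      < (2:ℝ) ^ (k + 1) := by
  classical
  set D : BS n → ℝ := fun y =>
    distMap (fun x : Fin s → BS n =>
        (nmExt (Function.update x i y), nmExt (fun j => f j (Function.update x i y j))))
      (distPi p) (z, z')
    - (2:ℝ) ^ (-(m : ℝ)) *
      distMap (fun x : Fin s → BS n => nmExt (fun j => f j (Function.update x i y j)))
        (distPi p) z'
  have hsum : ∀ S : Finset (BS n), (2 : ℝ) ^ k ≤ #S → |∑ y ∈ S, D y| ≤ ε * #S := by
    intro S hS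
    have hcard : (0 : ℝ) < #S := (rpow_pos_of_pos two_pos k).trans_le hS
    have hS' := h.abs_sum_mul_deviation_le hk hp hpk hf i z z'
      (isDist_unifOn (card_pos.mp (by exact_mod_cast hcard))) (minEntropyGE_unifOn hS)
    rwa [sum_unifOn_mul, abs_mul, abs_inv, Nat.abs_cast, inv_mul_le_iff₀ hcard, mul_comm] at hS'
  calc (Set.ncard {y | ε < |D y|} : ℝ) = #{y | ε < |D y|} := by
        rw [Set.ncard_eq_toFinset_card', Set.toFinset_ofPred]
    _ < 2 * 2 ^ k := card_filter_lt_abs_lt_of_abs_sum_le D (rpow_pos_of_pos two_pos k) hsum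
    _ = 2 ^ (k + 1) := by rw [rpow_add_one two_ne_zero]; ring
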